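/- arXiv:2205.13105 — 3 statements merged into one kernel-verified Lean document; each statement's English description precedes it below -/
import Mathlib

section
/- For any a > 0, there exist constants c₁, c₂ > 0 (depending on a) such that for all x > 0, ∑_{n≥0} xⁿ/(n!)^a ≤ c₁ exp(c₂ x^{1/a}). -/
/-! Raising `z ^ n / n! ≤ exp z` to the power `a` with `z = y ^ (1 / a)` gives
`y ^ n / (n!) ^ a ≤ exp (a * y ^ (1 / a))`. Applied with `y = 2 * x`, each term of the series
is at most `2⁻ⁿ * exp (a * (2 * x) ^ (1 / a))`, and the geometric series sums to `2`. -/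

open Real Nat

lemma Real.pow_div_factorial_rpow_le_exp {y a : ℝ} (hy : 0 ≤ y) (ha : 0 < a) (n : ℕ) :
    y ^ n / (n ! : ℝ) ^ a ≤ exp (a * y ^ (1 / a)) := by
  have hexp : (y ^ (1 / a)) ^ n / n ! ≤ exp (y ^ (1 / a)) :=
    pow_div_factorial_le_exp _ (by positivity) n
  calc y ^ n / (n ! : ℝ) ^ a = ((y ^ (1 / a)) ^ n / n !) ^ a := by
        rw [div_rpow (by positivity) (by positivity), ← rpow_natCast, ← rpow_natCast,
          ← rpow_mul hy, ← rpow_mul hy, one_div_mul_eq_div, div_mul_cancel₀ _ ha.ne']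
    _ ≤ exp (y ^ (1 / a)) ^ a := by gcongr
    _ = exp (a * y ^ (1 / a)) := by rw [← exp_mul, mul_comm]

lemma Real.tsum_pow_div_factorial_rpow_le {x a : ℝ} (hx : 0 ≤ x) (ha : 0 < a) :
    ∑' n : ℕ, x ^ n / (n ! : ℝ) ^ a ≤ 2 * exp (a * (2 * x) ^ (1 / a)) := by
  set C := exp (a * (2 * x) ^ (1 / a))
  have hterm (n : ℕ) : x ^ n / (n ! : ℝ) ^ a ≤ (1 / 2) ^ n * C :=
    calc x ^ n / (n ! : ℝ) ^ a = (1 / 2) ^ n * ((2 * x) ^ n / (n ! : ℝ) ^ a) := by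
          rw [mul_pow, ← mul_div_assoc, ← mul_assoc, ← mul_pow]; norm_num
      _ ≤ (1 / 2) ^ n * C := by
          gcongr; exact pow_div_factorial_rpow_le_exp (by positivity) ha n
  have hgeom : Summable fun n : ℕ ↦ (1 / 2 : ℝ) ^ n * C :=
    (summable_geometric_of_lt_one (by norm_num) (by norm_num)).mul_right C
  calc ∑' n : ℕ, x ^ n / (n ! : ℝ) ^ a
      ≤ ∑' n : ℕ, (1 / 2 : ℝ) ^ n * C :=
        (hgeom.of_nonneg_of_le (fun n ↦ by positivity) hterm).tsum_le_tsum hterm hgeom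
    _ = 2 * C := by
        rw [tsum_mul_right, tsum_geometric_of_lt_one (by norm_num) (by norm_num)]; norm_num

theorem stmt_1 (a : ℝ) (ha : 0 < a) :
    ∃ c₁ c₂ : ℝ, 0 < c₁ ∧ 0 < c₂ ∧ ∀ x : ℝ, 0 < x →
      ∑' n : ℕ, x ^ n / (n.factorial : ℝ) ^ a ≤ c₁ * Real.exp (c₂ * x ^ (1 / a)) := by
  refine ⟨2, a * 2 ^ (1 / a), two_pos, by positivity, fun x hx ↦ ?_⟩
  rw [mul_assoc, ← mul_rpow zero_le_two hx.le]
  exact tsum_pow_div_factorial_rpow_le hx.le ha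
end

section
/- Let μ(dξ) = c_H |ξ|^{1-2H} dξ on ℝ with 1/4 < H < 1/2 and c_H > 0 a constant. For every ε > 0 there exists C(ε) > 0 such that for all R > 0, ∫_ℝ ℓ_R(ξ) μ(dξ) ≤ ε + C(ε)/R, where ℓ_R(ξ) = sin²(Rξ)/(π R ξ²). -/
/-!
Substituting u = Rξ gives
∫ ℓ_R dμ = (c_H / π) R^{-p} ∫ sin² u / u² |u|^p du with p = 1 - 2H ∈ (0, 1).
The last integral is finite because p < 1: the integrand is at most 1 near the origin and
|u|^{p-2} at infinity. As p > 0, R^{-p} is below ε for large R, while for bounded R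
one writes R^{-p} = R^{1-p} / R with R^{1-p} bounded.
-/

open Real MeasureTheory Set Filter

lemma sin_sq_div_sq_mul_rpow_le {p t : ℝ} (hp : 0 ≤ p) (ht : 0 < t) :
    sin t ^ 2 / t ^ 2 * t ^ p ≤ if t ≤ 1 then 1 else t ^ (p - 2) := by
  split_ifs with ht1
  · have hsinc : sin t ^ 2 / t ^ 2 ≤ 1 := div_le_one_of_le₀ sin_sq_le_sq (sq_nonneg t)
    exact mul_le_one₀ hsinc (by positivity) (rpow_le_one ht.le ht1 hp)
  · calc sin t ^ 2 / t ^ 2 * t ^ p ≤ 1 / t ^ 2 * t ^ p := by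
          gcongr
          exact sin_sq_le_one t
      _ = t ^ (p - 2) := by rw [rpow_sub ht, rpow_two]; ring

lemma integrableOn_Ioi_ite_one_rpow_and_integral_eq {p : ℝ} (hp : p < 1) :
    IntegrableOn (fun t : ℝ ↦ if t ≤ 1 then 1 else t ^ (p - 2)) (Ioi 0) ∧
      ∫ t in Ioi 0, (if t ≤ 1 then 1 else t ^ (p - 2)) = 1 + 1 / (1 - p) := by
  have hp2 : p - 2 < -1 := by linarith
  have hIoc : EqOn (fun _ ↦ (1 : ℝ)) (fun t ↦ if t ≤ 1 then 1 else t ^ (p - 2)) (Ioc 0 1) :=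
    fun t ht ↦ (if_pos ht.2).symm
  have hIoi : EqOn (fun t ↦ t ^ (p - 2)) (fun t : ℝ ↦ if t ≤ 1 then 1 else t ^ (p - 2)) (Ioi 1) :=
    fun t ht ↦ (if_neg (not_le.mpr ht)).symm
  have hint₁ := (integrableOn_const (μ := volume) (C := (1 : ℝ))
    measure_Ioc_lt_top.ne).congr_fun hIoc measurableSet_Ioc
  have hint₂ := (integrableOn_Ioi_rpow_of_lt hp2 one_pos).congr_fun hIoi measurableSet_Ioi
  rw [← Ioc_union_Ioi_eq_Ioi zero_le_one]
  refine ⟨hint₁.union hint₂, ?_⟩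
  rw [setIntegral_union (Ioc_disjoint_Ioi le_rfl) measurableSet_Ioi hint₁ hint₂,
    ← setIntegral_congr_fun measurableSet_Ioc hIoc,
    ← setIntegral_congr_fun measurableSet_Ioi hIoi,
    setIntegral_const, volume_real_Ioc, integral_Ioi_rpow_of_lt hp2 one_pos, one_rpow,
    show p - 2 + 1 = -(1 - p) by ring, neg_div_neg_eq]
  norm_num

lemma integral_sin_sq_div_sq_mul_abs_rpow_le {p : ℝ} (hp0 : 0 ≤ p) (hp1 : p < 1) :
    ∫ u, sin u ^ 2 / u ^ 2 * |u| ^ p ≤ 2 * (1 + 1 / (1 - p)) := by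
  obtain ⟨hint, hval⟩ := integrableOn_Ioi_ite_one_rpow_and_integral_eq hp1
  have hsym :
      ∫ u, sin u ^ 2 / u ^ 2 * |u| ^ p = 2 * ∫ t in Ioi 0, sin t ^ 2 / t ^ 2 * t ^ p := by
    rw [← integral_comp_abs]
    congr 1 with u
    rcases abs_choice u with h | h <;> simp [h, sin_neg]
  rw [hsym, ← hval]
  refine mul_le_mul_of_nonneg_left ?_ zero_le_two
  refine integral_mono_of_nonneg ?_ hint ?_ <;>
    filter_upwards [self_mem_ae_restrict measurableSet_Ioi] with t ht
  · exact mul_nonneg (by positivity) (rpow_nonneg (le_of_lt ht) _)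
  · exact sin_sq_div_sq_mul_rpow_le hp0 ht

lemma integral_sin_sq_div_mul_abs_rpow_eq (p cH : ℝ) {R : ℝ} (hR : 0 < R) :
    ∫ ξ, sin (R * ξ) ^ 2 / (π * R * ξ ^ 2) * (cH * |ξ| ^ p)
      = cH / π * R ^ (-p) * ∫ u, sin u ^ 2 / u ^ 2 * |u| ^ p := by
  have hscale : ∀ ξ, sin (R * ξ) ^ 2 / (π * R * ξ ^ 2) * (cH * |ξ| ^ p)
      = cH / π * R ^ (1 - p) * (sin (R * ξ) ^ 2 / (R * ξ) ^ 2 * |R * ξ| ^ p) := by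
    intro ξ
    rcases eq_or_ne ξ 0 with rfl | hξ
    · simp
    rw [abs_mul, abs_of_pos hR, mul_rpow hR.le (abs_nonneg ξ), rpow_sub hR, rpow_one]
    have := pi_pos
    have := rpow_pos_of_pos hR p
    field_simp
  simp_rw [hscale]
  rw [integral_const_mul, Measure.integral_comp_mul_left (fun u ↦ sin u ^ 2 / u ^ 2 * |u| ^ p),
    abs_of_pos (inv_pos.mpr hR), smul_eq_mul, rpow_sub hR, rpow_one, rpow_neg hR.le]
  field_simp

lemma exists_mul_rpow_neg_le_add_div {p K ε : ℝ} (hp0 : 0 < p) (hp1 : p ≤ 1) (hK : 0 ≤ K)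
    (hε : 0 < ε) : ∃ C, 0 < C ∧ ∀ R, 0 < R → K * R ^ (-p) ≤ ε + C / R := by
  obtain ⟨R₀, hR₀⟩ := eventually_atTop.mp
    (((tendsto_rpow_neg_atTop hp0).const_mul K).eventually (gt_mem_nhds (by simpa using hε)))
  set R₁ := max R₀ 1
  have hR₁ : 0 < R₁ := zero_lt_one.trans_le (le_max_right _ _)
  refine ⟨K * R₁ ^ (1 - p) + 1, by positivity, fun R hR ↦ ?_⟩
  rcases le_or_gt R₁ R with hle | hlt
  · have := hR₀ R ((le_max_left _ _).trans hle)
    have : 0 < (K * R₁ ^ (1 - p) + 1) / R := by positivity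
    linarith
  · calc K * R ^ (-p) = K * R ^ (1 - p) / R := by
          rw [rpow_sub hR, rpow_one, rpow_neg hR.le]; field_simp
      _ ≤ (K * R₁ ^ (1 - p) + 1) / R := by
          have : R ^ (1 - p) ≤ R₁ ^ (1 - p) := by gcongr
          gcongr
          nlinarith
      _ ≤ ε + (K * R₁ ^ (1 - p) + 1) / R := le_add_of_nonneg_left hε.le

theorem stmt_9 (H : ℝ) (hH1 : 1 / 4 < H) (hH2 : H < 1 / 2) (cH : ℝ) (hcH : 0 < cH)
    (ε : ℝ) (hε : 0 < ε) :
    ∃ C : ℝ, 0 < C ∧ ∀ R : ℝ, 0 < R →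
      ∫ ξ : ℝ, Real.sin (R * ξ) ^ 2 / (Real.pi * R * ξ ^ 2) * (cH * |ξ| ^ (1 - 2 * H))
        ≤ ε + C / R := by
  set p := 1 - 2 * H
  have hp0 : 0 < p := by linarith
  have hp1 : p < 1 := by linarith
  set K := cH / π * (2 * (1 + 1 / (1 - p)))
  have hK : 0 ≤ K := by
    have : 0 < 1 - p := by linarith
    have := pi_pos
    positivity
  obtain ⟨C, hC, hbound⟩ := exists_mul_rpow_neg_le_add_div hp0 hp1.le hK hε
  refine ⟨C, hC, fun R hR ↦ ?_⟩
  calc _ = cH / π * R ^ (-p) * ∫ u, sin u ^ 2 / u ^ 2 * |u| ^ p :=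
        integral_sin_sq_div_mul_abs_rpow_eq _ _ hR
    _ ≤ cH / π * R ^ (-p) * (2 * (1 + 1 / (1 - p))) := by
        have := pi_pos
        gcongr
        exact integral_sin_sq_div_sq_mul_abs_rpow_le hp0.le hp1
    _ = K * R ^ (-p) := by ring
    _ ≤ ε + C / R := hbound R hR
end

section
/- Let μ be a measure on ℝ^d satisfying Dalang's condition ∫(1+|ξ|²)^{-1} μ(dξ) < ∞, and for t > 0 and n ≥ 1 define h_n(t) = ∫_{T_n(t)} ∫_{(ℝ^d)ⁿ} ∏_{j=1}^{n} e^{-(t_{j+1}-t_j)|ξ_j|²} μ(dξ₁)…μ(dξ_n) dt₁…dt_n, with t_{n+1} = t and h_0(t)=1. Then for any t > 0 and γ > 0, the series ∑_{n≥0} γⁿ h_n(t) converges. -/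
/-!
The gaps `s_j = t_{j+1} - t_j` of a point of `T_n(t)` are positive and sum to at most `t`, so for
every `β > 0` one may insert the factor `e^{β (t - ∑ s_j)} ≥ 1`. After the volume-preserving change
of variables from times to gaps, the integral factorises:
`h_n(t) ≤ e^{βt} G(β)^n` with `G(β) = ∫ (β + |ξ|²)⁻¹ μ(dξ) = ∫₀^∞ ∫ e^{-s(β + |ξ|²)} μ(dξ) ds`.
Dalang's condition and dominated convergence give `G(β) → 0` as `β → ∞`, so for `β` with
`γ G(β) < 1` the series is dominated by a convergent geometric series.
-/

open MeasureTheory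

/-- The simplex integral `h_n(t)` from Lemma 3.8 of Balan–Chen, with `t_{n+1} = t`. -/
noncomputable def hSeq (d n : ℕ) (μ : Measure (EuclideanSpace ℝ (Fin d))) (t : ℝ) : ENNReal :=
  if n = 0 then 1 else
  ∫⁻ p in {p : Fin n → ℝ | StrictMono p ∧ ∀ i, 0 < p i ∧ p i < t},
    ∫⁻ ξ : Fin n → EuclideanSpace ℝ (Fin d),
      ENNReal.ofReal (∏ j : Fin n,
        Real.exp (-((if h : (j : ℕ) + 1 < n then p ⟨(j : ℕ) + 1, h⟩ else t) - p j) * ‖ξ j‖ ^ 2))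
      ∂(Measure.pi fun _ => μ)

open Set Filter
open scoped ENNReal Topology

theorem MeasureTheory.lintegral_fin_nat_prod_eq_prod {n : ℕ} {E : Type*} [MeasurableSpace E]
    {μ : Fin n → Measure E} [∀ i, SigmaFinite (μ i)]
    {f : Fin n → E → ℝ≥0∞} (hf : ∀ i, Measurable (f i)) :
    ∫⁻ x : Fin n → E, ∏ i, f i (x i) ∂(Measure.pi μ) = ∏ i, ∫⁻ x, f i x ∂(μ i) := by
  induction n with
  | zero => simp
  | succ n ih =>
    calc
      _ = ∫⁻ x : E × (Fin n → E), f 0 x.1 * ∏ i : Fin n, f i.succ (x.2 i)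
          ∂((μ 0).prod (Measure.pi fun i ↦ μ i.succ)) := by
        rw [← ((measurePreserving_piFinSuccAbove μ 0).symm).lintegral_comp_emb
          (MeasurableEquiv.measurableEmbedding _)]
        simp_rw [MeasurableEquiv.piFinSuccAbove_symm_apply, Fin.insertNthEquiv,
          Fin.prod_univ_succ, Fin.insertNth_zero, Equiv.coe_fn_mk, Fin.cons_succ,
          Fin.zero_succAbove, Fin.cons_zero]
        rfl
      _ = (∫⁻ x, f 0 x ∂μ 0) * ∏ i : Fin n, ∫⁻ x, f i.succ x ∂(μ i.succ) := by
        have hg : Measurable fun x : Fin n → E ↦ ∏ i, f i.succ (x i) :=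
          Finset.measurable_prod _ fun i _ ↦ (hf i.succ).comp (measurable_pi_apply i)
        rw [← ih fun i ↦ hf i.succ, ← lintegral_prod_mul (hf 0).aemeasurable hg.aemeasurable]
      _ = ∏ i, ∫⁻ x, f i x ∂(μ i) := (Fin.prod_univ_succ fun i ↦ ∫⁻ x, f i x ∂(μ i)).symm

theorem MeasureTheory.sigmaFinite_of_lintegral_ne_top {α : Type*} [MeasurableSpace α]
    {μ : Measure α} {f : α → ℝ≥0∞} (hf : AEMeasurable f μ) (hf_ne_zero : ∀ᵐ x ∂μ, f x ≠ 0)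
    (hf_int : ∫⁻ x, f x ∂μ ≠ ∞) : SigmaFinite μ := by
  have := isFiniteMeasure_withDensity hf_int
  rw [← withDensity_inv_same₀ hf hf_ne_zero (ae_lt_top' hf hf_int).ne_of_lt]
  exact SigmaFinite.withDensity_of_ne_top <| (withDensity_absolutelyContinuous μ f).ae_le <|
    hf_ne_zero.mono fun x hx ↦ ENNReal.inv_ne_top.2 hx

theorem lintegral_exp_neg_mul_Ioi {a : ℝ} (ha : 0 < a) :
    ∫⁻ s in Ioi 0, ENNReal.ofReal (Real.exp (-a * s)) = ENNReal.ofReal a⁻¹ := by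
  rw [← ofReal_integral_eq_lintegral_ofReal (integrableOn_exp_mul_Ioi (by linarith) 0)
    (ae_of_all _ fun s ↦ (Real.exp_pos _).le), integral_exp_mul_Ioi (by linarith)]
  simp [div_neg, neg_div]

def gapMatrix (n : ℕ) : Matrix (Fin n) (Fin n) ℝ :=
  Matrix.of fun j i ↦ (if (i : ℕ) = j + 1 then 1 else 0) - if i = j then 1 else 0

theorem gapMatrix_mulVec {n : ℕ} (p : Fin n → ℝ) (j : Fin n) :
    Matrix.mulVec (gapMatrix n) p j = (if h : (j : ℕ) + 1 < n then p ⟨j + 1, h⟩ else 0) - p j := by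
  simp only [gapMatrix, Matrix.mulVec, dotProduct, Matrix.of_apply, sub_mul, ite_mul, one_mul,
    zero_mul, Finset.sum_sub_distrib, Finset.sum_ite_eq', Finset.mem_univ, if_true]
  split_ifs with h
  · rw [Finset.sum_eq_single_of_mem ⟨j + 1, h⟩ (Finset.mem_univ _) fun i _ hi ↦
      if_neg fun h' ↦ hi (Fin.ext h')]
    simp
  · refine congrArg (· - p j) (Finset.sum_eq_zero fun i _ ↦ if_neg fun hi ↦ h ?_)
    exact hi ▸ i.isLt

theorem det_gapMatrix (n : ℕ) : (gapMatrix n).det = (-1) ^ n := by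
  rw [Matrix.det_of_isUpperTriangular]
  · simp [gapMatrix]
  · intro i j (hji : j < i)
    have : (j : ℕ) ≠ i + 1 := by have := Fin.lt_def.1 hji; omega
    simp [gapMatrix, this, hji.ne]

def simplexGap {n : ℕ} (t : ℝ) (p : Fin n → ℝ) (j : Fin n) : ℝ :=
  (if h : (j : ℕ) + 1 < n then p ⟨(j : ℕ) + 1, h⟩ else t) - p j

theorem simplexGap_eq_toLin'_add (n : ℕ) (t : ℝ) :
    simplexGap t = (· + fun j : Fin n ↦ if (j : ℕ) + 1 < n then 0 else t) ∘
      Matrix.toLin' (gapMatrix n) := by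
  ext p j
  simp only [Function.comp_apply, Pi.add_apply, Matrix.toLin'_apply, gapMatrix_mulVec, simplexGap]
  split_ifs <;> ring

theorem measurePreserving_simplexGap (n : ℕ) (t : ℝ) :
    MeasurePreserving (simplexGap (n := n) t) := by
  have hdet : (gapMatrix n).det ≠ 0 := by simp [det_gapMatrix]
  have hlin : MeasurePreserving (Matrix.toLin' (gapMatrix n)) :=
    ⟨(Matrix.toLin' (gapMatrix n)).continuous_of_finiteDimensional.measurable, by
      rw [Real.map_matrix_volume_pi_eq_smul_volume_pi hdet, det_gapMatrix]; simp⟩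
  rw [simplexGap_eq_toLin'_add]
  exact (measurePreserving_add_right _ _).comp hlin

def timeSimplex (n : ℕ) (t : ℝ) : Set (Fin n → ℝ) :=
  {p | StrictMono p ∧ ∀ i, 0 < p i ∧ p i < t}

theorem measurableSet_timeSimplex (n : ℕ) (t : ℝ) : MeasurableSet (timeSimplex n t) := by
  have : timeSimplex n t =
      (⋂ (i) (j) (_ : i < j), {p | p i < p j}) ∩ ⋂ i, {p | 0 < p i} ∩ {p | p i < t} := by
    ext p; simp [timeSimplex, StrictMono, forall_and]
  rw [this]
  exact (MeasurableSet.iInter fun i ↦ .iInter fun j ↦ .iInter fun _ ↦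
      measurableSet_lt (measurable_pi_apply i) (measurable_pi_apply j)).inter
    (.iInter fun i ↦ (measurableSet_lt measurable_const (measurable_pi_apply i)).inter
      (measurableSet_lt (measurable_pi_apply i) measurable_const))

theorem simplexGap_pos {n : ℕ} {t : ℝ} {p : Fin n → ℝ} (hp : p ∈ timeSimplex n t) (j : Fin n) :
    0 < simplexGap t p j := by
  rw [simplexGap, sub_pos]
  split_ifs with h
  · exact hp.1 (Fin.lt_def.2 (Nat.lt_succ_self _))
  · exact (hp.2 j).2

theorem sum_simplexGap {n : ℕ} (hn : 0 < n) (t : ℝ) (p : Fin n → ℝ) :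
    ∑ j, simplexGap t p j = t - p ⟨0, hn⟩ := by
  set q : ℕ → ℝ := fun i ↦ if h : i < n then p ⟨i, h⟩ else t
  have hq : ∀ j : Fin n, simplexGap t p j = q (j + 1) - q j := fun j ↦ by
    simp [simplexGap, q, j.isLt]
  rw [Finset.sum_congr rfl fun j _ ↦ hq j, Fin.sum_univ_eq_sum_range (fun i ↦ q (i + 1) - q i),
    Finset.sum_range_sub]
  simp [q, hn]

theorem setLIntegral_timeSimplex_prod_le (n : ℕ) (t : ℝ) {k : ℝ → ℝ≥0∞} (hk : Measurable k) :
    ∫⁻ p in timeSimplex n t, ∏ j, k (simplexGap t p j) ≤ (∫⁻ s in Ioi 0, k s) ^ n := by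
  set g : (Fin n → ℝ) → ℝ≥0∞ := fun w ↦ ∏ j, (Ioi 0).indicator k (w j)
  have hg : Measurable g := Finset.measurable_prod _ fun j _ ↦
    (hk.indicator measurableSet_Ioi).comp (measurable_pi_apply j)
  calc ∫⁻ p in timeSimplex n t, ∏ j, k (simplexGap t p j)
      = ∫⁻ p in timeSimplex n t, g (simplexGap t p) :=
        setLIntegral_congr_fun (measurableSet_timeSimplex n t) fun p hp ↦
          Finset.prod_congr rfl fun j _ ↦ (indicator_of_mem (simplexGap_pos hp j) k).symm
    _ ≤ ∫⁻ p, g (simplexGap t p) := setLIntegral_le_lintegral _ _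
    _ = ∫⁻ w, g w := (measurePreserving_simplexGap n t).lintegral_comp hg
    _ = (∫⁻ s in Ioi 0, k s) ^ n := by
      rw [volume_pi, lintegral_fin_nat_prod_eq_prod fun _ ↦ hk.indicator measurableSet_Ioi]
      simp [lintegral_indicator measurableSet_Ioi]

section Spectral

variable {E : Type*} [NormedAddCommGroup E] [MeasurableSpace E] [OpensMeasurableSpace E]
  (μ : Measure E)

noncomputable def resolventMass (β : ℝ) : ℝ≥0∞ :=
  ∫⁻ ξ, ENNReal.ofReal ((β + ‖ξ‖ ^ 2)⁻¹) ∂μ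

noncomputable def heatMass (β s : ℝ) : ℝ≥0∞ :=
  ∫⁻ ξ, ENNReal.ofReal (Real.exp (-(β + ‖ξ‖ ^ 2) * s)) ∂μ

theorem measurable_heatMass [SFinite μ] (β : ℝ) : Measurable (heatMass μ β) :=
  Measurable.lintegral_prod_right (by fun_prop)

theorem lintegral_heatMass_Ioi [SFinite μ] {β : ℝ} (hβ : 0 < β) :
    ∫⁻ s in Ioi 0, heatMass μ β s = resolventMass μ β := by
  simp only [heatMass]
  rw [lintegral_lintegral_swap (by fun_prop)]
  exact lintegral_congr fun ξ ↦ lintegral_exp_neg_mul_Ioi (by positivity)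

theorem tendsto_resolventMass_atTop (h : resolventMass μ 1 ≠ ∞) :
    Tendsto (resolventMass μ) atTop (𝓝 0) := by
  have hlim : ∀ ξ : E, Tendsto (fun β : ℝ ↦ ENNReal.ofReal ((β + ‖ξ‖ ^ 2)⁻¹)) atTop (𝓝 0) :=
    fun ξ ↦ ENNReal.ofReal_zero ▸ ENNReal.tendsto_ofReal
      (tendsto_atTop_add_const_right _ _ tendsto_id).inv_tendsto_atTop
  have := tendsto_lintegral_filter_of_dominated_convergence
    (F := fun β ξ ↦ ENNReal.ofReal ((β + ‖ξ‖ ^ 2)⁻¹)) _ (.of_forall fun β ↦ by fun_prop)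
    ((eventually_ge_atTop 1).mono fun β hβ ↦ ae_of_all _ fun ξ ↦
      ENNReal.ofReal_le_ofReal (inv_anti₀ (by positivity) (by linarith)))
    h (ae_of_all _ hlim)
  rwa [lintegral_zero] at this

theorem sigmaFinite_of_resolventMass_ne_top (h : resolventMass μ 1 ≠ ∞) : SigmaFinite μ :=
  sigmaFinite_of_lintegral_ne_top (by fun_prop)
    (ae_of_all _ fun ξ ↦ (ENNReal.ofReal_pos.2 (by positivity)).ne') h

theorem lintegral_pi_ofReal_prod_exp [SigmaFinite μ] {n : ℕ} (β : ℝ) (g : Fin n → ℝ) :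
    ∫⁻ ξ : Fin n → E, ENNReal.ofReal (∏ j, Real.exp (-g j * ‖ξ j‖ ^ 2)) ∂(Measure.pi fun _ ↦ μ)
      = ENNReal.ofReal (Real.exp (β * ∑ j, g j)) * ∏ j, heatMass μ β (g j) := by
  have hsplit : ∀ ξ : Fin n → E, ENNReal.ofReal (∏ j, Real.exp (-g j * ‖ξ j‖ ^ 2)) =
      ENNReal.ofReal (Real.exp (β * ∑ j, g j)) *
        ∏ j, ENNReal.ofReal (Real.exp (-(β + ‖ξ j‖ ^ 2) * g j)) := fun ξ ↦ by
    rw [← ENNReal.ofReal_prod_of_nonneg fun j _ ↦ (Real.exp_pos _).le,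
      ← ENNReal.ofReal_mul (Real.exp_pos _).le, ← Real.exp_sum, ← Real.exp_sum, ← Real.exp_add,
      Finset.mul_sum, ← Finset.sum_add_distrib]
    congr 2
    exact Finset.sum_congr rfl fun j _ ↦ by ring
  simp_rw [hsplit]
  rw [lintegral_const_mul _ (by fun_prop), lintegral_fin_nat_prod_eq_prod
    (f := fun j ξ ↦ ENNReal.ofReal (Real.exp (-(β + ‖ξ‖ ^ 2) * g j))) fun j ↦ by fun_prop]
  rfl

end Spectral

theorem hSeq_le_exp_mul_resolventMass_pow {d : ℕ} (μ : Measure (EuclideanSpace ℝ (Fin d)))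
    [SigmaFinite μ] {t β : ℝ} (ht : 0 ≤ t) (hβ : 0 < β) (n : ℕ) :
    hSeq d n μ t ≤ ENNReal.ofReal (Real.exp (β * t)) * resolventMass μ β ^ n := by
  rcases n.eq_zero_or_pos with rfl | hn
  · simpa [hSeq] using Real.one_le_exp (mul_nonneg hβ.le ht)
  have hgap : Measurable (simplexGap (n := n) t) := (measurePreserving_simplexGap n t).measurable
  have hprod : Measurable fun p ↦ ∏ j, heatMass μ β (simplexGap t p j) :=
    Finset.measurable_prod _ fun j _ ↦
      (measurable_heatMass μ β).comp ((measurable_pi_apply j).comp hgap)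
  rw [hSeq, if_neg hn.ne']
  calc ∫⁻ p in timeSimplex n t, ∫⁻ ξ : Fin n → EuclideanSpace ℝ (Fin d),
        ENNReal.ofReal (∏ j, Real.exp (-simplexGap t p j * ‖ξ j‖ ^ 2)) ∂(Measure.pi fun _ ↦ μ)
      = ∫⁻ p in timeSimplex n t, ENNReal.ofReal (Real.exp (β * ∑ j, simplexGap t p j)) *
          ∏ j, heatMass μ β (simplexGap t p j) := by
        simp_rw [lintegral_pi_ofReal_prod_exp μ β]
    _ ≤ ∫⁻ p in timeSimplex n t,
          ENNReal.ofReal (Real.exp (β * t)) * ∏ j, heatMass μ β (simplexGap t p j) := by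
        refine setLIntegral_mono (hprod.const_mul _) fun p hp ↦ ?_
        gcongr
        rw [sum_simplexGap hn]
        linarith [(hp.2 ⟨0, hn⟩).1]
    _ ≤ ENNReal.ofReal (Real.exp (β * t)) * (∫⁻ s in Ioi 0, heatMass μ β s) ^ n := by
        rw [lintegral_const_mul _ hprod]
        gcongr
        exact setLIntegral_timeSimplex_prod_le n t (measurable_heatMass μ β)
    _ = ENNReal.ofReal (Real.exp (β * t)) * resolventMass μ β ^ n := by
        rw [lintegral_heatMass_Ioi μ hβ]

theorem stmt_13 (d : ℕ) (μ : Measure (EuclideanSpace ℝ (Fin d)))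
    (hD : ∫⁻ ξ, ENNReal.ofReal ((1 + ‖ξ‖ ^ 2)⁻¹) ∂μ < ⊤)
    (t γ : ℝ) (ht : 0 < t) (hγ : 0 < γ) :
    ∑' n : ℕ, ENNReal.ofReal (γ ^ n) * hSeq d n μ t < ⊤ := by
  have hD' : resolventMass μ 1 ≠ ∞ := hD.ne
  have := sigmaFinite_of_resolventMass_ne_top μ hD'
  obtain ⟨β, hβ, hsmall⟩ : ∃ β > 0, ENNReal.ofReal γ * resolventMass μ β < 1 := by
    have hlim := ENNReal.Tendsto.const_mul (tendsto_resolventMass_atTop μ hD')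
      (Or.inr ENNReal.ofReal_ne_top) (a := ENNReal.ofReal γ)
    rw [mul_zero] at hlim
    exact ((eventually_gt_atTop 0).and (hlim.eventually_lt_const zero_lt_one)).exists
  calc ∑' n : ℕ, ENNReal.ofReal (γ ^ n) * hSeq d n μ t
      ≤ ∑' n : ℕ, ENNReal.ofReal (Real.exp (β * t)) * (ENNReal.ofReal γ * resolventMass μ β) ^ n :=
        ENNReal.tsum_le_tsum fun n ↦ by
          rw [ENNReal.ofReal_pow hγ.le, mul_pow, mul_left_comm]
          gcongr
          exact hSeq_le_exp_mul_resolventMass_pow μ ht.le hβ n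
    _ = ENNReal.ofReal (Real.exp (β * t)) * (1 - ENNReal.ofReal γ * resolventMass μ β)⁻¹ := by
        rw [ENNReal.tsum_mul_left, ENNReal.tsum_geometric]
    _ < ∞ := ENNReal.mul_lt_top ENNReal.ofReal_lt_top (ENNReal.inv_lt_top.2 (tsub_pos_of_lt hsmall))
end
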